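/- arXiv:1303.5994 — 2 statements merged into one kernel-verified Lean document; each statement's English description precedes it below -/
import Mathlib

section
/- Let K be a field of characteristic 0 and n ≥ 2. In the group algebra K[B_n] one has T_nP_n = T_n' and U_nQ_n = U_n'. -/
open scoped BigOperators

/-- Defining relations of the braid group `B_n`: generator `i : Fin (n-1)` stands for `σ_{i+1}`. -/
def braidRels (n : ℕ) : Set (FreeGroup (Fin (n - 1))) :=
  {r | (∃ i j : Fin (n - 1), (i : ℕ) + 2 ≤ (j : ℕ) ∧
          r = FreeGroup.of i * FreeGroup.of j * (FreeGroup.of j * FreeGroup.of i)⁻¹) ∨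
       (∃ i j : Fin (n - 1), (j : ℕ) = (i : ℕ) + 1 ∧
          r = FreeGroup.of i * FreeGroup.of j * FreeGroup.of i *
              (FreeGroup.of j * FreeGroup.of i * FreeGroup.of j)⁻¹)}

/-- The braid group on `n` strands. -/
abbrev BraidGroup (n : ℕ) := PresentedGroup (braidRels n)

/-- The generator `σ_i` of `B_n` (paper indexing `1 ≤ i ≤ n-1`; otherwise `1`). -/
def sig (n i : ℕ) : BraidGroup n :=
  if h : 1 ≤ i ∧ i ≤ n - 1 then PresentedGroup.of ⟨i - 1, by omega⟩ else 1

/-- The product `σ_{i₁} σ_{i₂} ⋯ σ_{i_r}` attached to a list of (paper) indices. -/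
def word (n : ℕ) (l : List ℕ) : BraidGroup n := (l.map (sig n)).prod

/-- The right differential element
`T_n = 1 + σ_{n−1} + σ_{n−1}σ_{n−2} + ⋯ + σ_{n−1}σ_{n−2}⋯σ_1` in `K[B_n]`. -/
noncomputable def Tel (K : Type*) [Field K] (n : ℕ) : MonoidAlgebra K (BraidGroup n) :=
  ∑ j ∈ Finset.range n,
    MonoidAlgebra.of K (BraidGroup n) (word n ((List.range' (n - j) j).reverse))

/-- The left differential element
`U_n = 1 + σ_1 + σ_1σ_2 + ⋯ + σ_1σ_2⋯σ_{n−1}` in `K[B_n]`. -/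
noncomputable def Uel (K : Type*) [Field K] (n : ℕ) : MonoidAlgebra K (BraidGroup n) :=
  ∑ j ∈ Finset.range n, MonoidAlgebra.of K (BraidGroup n) (word n (List.range' 1 j))

/-- The right Dynkin element
`P_n = (1 − σ_{n−1}σ_{n−2}⋯σ_1)(1 − σ_{n−1}σ_{n−2}⋯σ_2)⋯(1 − σ_{n−1})` in `K[B_n]`. -/
noncomputable def Pel (K : Type*) [Field K] (n : ℕ) : MonoidAlgebra K (BraidGroup n) :=
  ((List.range' 1 (n - 1)).map (fun j =>
    1 - MonoidAlgebra.of K (BraidGroup n) (word n ((List.range' j (n - j)).reverse)))).prod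

/-- The left Dynkin element
`Q_n = (1 − σ_1σ_2⋯σ_{n−1})(1 − σ_1σ_2⋯σ_{n−2})⋯(1 − σ_1)` in `K[B_n]`. -/
noncomputable def Qel (K : Type*) [Field K] (n : ℕ) : MonoidAlgebra K (BraidGroup n) :=
  (((List.range' 1 (n - 1)).reverse).map (fun m =>
    1 - MonoidAlgebra.of K (BraidGroup n) (word n (List.range' 1 m)))).prod

/-- `T_n' = (1 − σ_{n−1}²σ_{n−2}⋯σ_1)(1 − σ_{n−1}²σ_{n−2}⋯σ_2)⋯(1 − σ_{n−1}²)` in `K[B_n]`. -/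
noncomputable def Tpel (K : Type*) [Field K] (n : ℕ) : MonoidAlgebra K (BraidGroup n) :=
  ((List.range' 1 (n - 1)).map (fun j =>
    1 - MonoidAlgebra.of K (BraidGroup n)
          (sig n (n - 1) * word n ((List.range' j (n - j)).reverse)))).prod

/-- `U_n' = (1 − σ_1²σ_2⋯σ_{n−1})(1 − σ_1²σ_2⋯σ_{n−2})⋯(1 − σ_1²)` in `K[B_n]`. -/
noncomputable def Upel (K : Type*) [Field K] (n : ℕ) : MonoidAlgebra K (BraidGroup n) :=
  (((List.range' 1 (n - 1)).reverse).map (fun m =>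
    1 - MonoidAlgebra.of K (BraidGroup n) (sig n 1 * word n (List.range' 1 m)))).prod


namespace BraidProof

variable {n : ℕ}

/-! ### Relations in the presented group -/

lemma mk_rel_one {r : FreeGroup (Fin (n-1))} (h : r ∈ braidRels n) :
    PresentedGroup.mk (braidRels n) r = 1 :=
  (QuotientGroup.eq_one_iff r).2 (Subgroup.subset_normalClosure h)

lemma sig_eq (i : ℕ) (h1 : 1 ≤ i) (h2 : i ≤ n - 1) :
    sig n i = PresentedGroup.of (rels := braidRels n) ⟨i - 1, by omega⟩ := by
  rw [sig, dif_pos ⟨h1, h2⟩]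

lemma braid_comm {i j : ℕ} (hi : 1 ≤ i) (hij : i + 2 ≤ j) (hj : j ≤ n - 1) :
    sig n i * sig n j = sig n j * sig n i := by
  have hi2 : i ≤ n - 1 := by omega
  have hj1 : 1 ≤ j := by omega
  rw [sig_eq i hi hi2, sig_eq j hj1 hj]
  set a : Fin (n-1) := ⟨i - 1, by omega⟩ with ha
  set b : Fin (n-1) := ⟨j - 1, by omega⟩ with hb
  have hr : FreeGroup.of a * FreeGroup.of b * (FreeGroup.of b * FreeGroup.of a)⁻¹
      ∈ braidRels n := Or.inl ⟨a, b, by simp only [ha, hb]; omega, rfl⟩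
  have h1 := mk_rel_one hr
  simp only [map_mul, map_inv, mul_inv_eq_one] at h1
  exact h1

lemma braid_braid {i : ℕ} (hi : 1 ≤ i) (hj : i + 1 ≤ n - 1) :
    sig n i * sig n (i+1) * sig n i = sig n (i+1) * sig n i * sig n (i+1) := by
  rw [sig_eq i hi (by omega), sig_eq (i+1) (by omega) hj]
  set a : Fin (n-1) := ⟨i - 1, by omega⟩ with ha
  set b : Fin (n-1) := ⟨i + 1 - 1, by omega⟩ with hb
  have hr : FreeGroup.of a * FreeGroup.of b * FreeGroup.of a *
      (FreeGroup.of b * FreeGroup.of a * FreeGroup.of b)⁻¹ ∈ braidRels n :=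
    Or.inr ⟨a, b, by simp only [ha, hb]; omega, rfl⟩
  have h1 := mk_rel_one hr
  simp only [map_mul, map_inv, mul_inv_eq_one] at h1
  exact h1

/-! ### Words -/

lemma word_nil : word n [] = 1 := rfl

lemma word_cons (a : ℕ) (l : List ℕ) : word n (a :: l) = sig n a * word n l := by
  simp [word]

lemma word_append (l₁ l₂ : List ℕ) : word n (l₁ ++ l₂) = word n l₁ * word n l₂ := by
  simp [word]

lemma word_singleton (a : ℕ) : word n [a] = sig n a := by simp [word]

lemma sig_comm_word {k : ℕ} (hk1 : 1 ≤ k) (hk2 : k ≤ n - 1) {l : List ℕ}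
    (h : ∀ a ∈ l, 1 ≤ a ∧ a ≤ n - 1 ∧ (a + 2 ≤ k ∨ k + 2 ≤ a)) :
    Commute (sig n k) (word n l) := by
  induction l with
  | nil => rw [word_nil]; exact Commute.one_right _
  | cons a t ih =>
    rw [word_cons]
    refine Commute.mul_right ?_ (ih fun b hb => h b (List.mem_cons_of_mem _ hb))
    obtain ⟨ha1, ha2, hor⟩ := h a List.mem_cons_self
    rcases hor with hor | hor
    · exact (braid_comm ha1 hor hk2).symm
    · exact braid_comm hk1 hor ha2

/-! ### Right-hand (descending) words -/

/-- `Dw n j = σ_{n-1} σ_{n-2} ⋯ σ_j` (equal to `1` if `j ≥ n`). -/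
def Dw (n j : ℕ) : BraidGroup n := word n ((List.range' j (n - j)).reverse)

lemma Dw_ge {j : ℕ} (h : n ≤ j) : Dw n j = 1 := by
  rw [Dw, Nat.sub_eq_zero_of_le h]; rfl

lemma Dw_succ {j : ℕ} (h : j < n) : Dw n j = Dw n (j+1) * sig n j := by
  rw [Dw, Dw, show n - j = (n - (j+1)) + 1 by omega, List.range'_succ,
    List.reverse_cons, word_append, word_singleton]

lemma Dw_top {j : ℕ} (h : j ≤ n - 1) (hn : 1 ≤ n) :
    Dw n j = sig n (n-1) * word n ((List.range' j (n - 1 - j)).reverse) := by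
  rw [Dw, show n - j = (n - 1 - j) + 1 by omega, List.range'_1_concat,
    show j + (n - 1 - j) = n - 1 by omega, List.reverse_append, List.reverse_singleton,
    List.singleton_append, word_cons]

lemma Dw_decomp {m k : ℕ} (hm : 1 ≤ m) (hmk : m ≤ k) (hk : k + 2 ≤ n) :
    Dw n m = Dw n (k+2) * sig n (k+1) * sig n k * word n ((List.range' m (k - m)).reverse) := by
  have h1 : List.range' m (k - m) ++ List.range' k (n - k) = List.range' m (n - m) := by
    have : List.range' m (k - m) ++ List.range' (m + (k - m)) (n - k)
        = List.range' m ((k - m) + (n - k)) := List.range'_append_1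
    rwa [show m + (k - m) = k by omega, show (k - m) + (n - k) = n - m by omega] at this
  have h2 : List.range' k (n - k) = k :: (k+1) :: List.range' (k+2) (n - (k+2)) := by
    rw [show n - k = (n - (k+2)) + 1 + 1 by omega, List.range'_succ, List.range'_succ]
  rw [Dw, ← h1, h2, List.reverse_append]
  simp only [List.reverse_cons, List.reverse_nil, List.nil_append, List.append_assoc,
    List.cons_append, List.nil_append]
  rw [show ((List.range' (k+2) (n - (k+2))).reverse ++ (k+1) :: k ::
      (List.range' m (k - m)).reverse)
    = ((List.range' (k+2) (n - (k+2))).reverse ++ [k+1]) ++ ([k] ++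
      (List.range' m (k - m)).reverse) by simp]
  rw [word_append, word_append, word_append, word_singleton, word_singleton, Dw]
  group

lemma sig_mul_Dw {m k : ℕ} (hm : 1 ≤ m) (hmk : m ≤ k) (hk : k + 2 ≤ n) :
    sig n k * Dw n m = Dw n m * sig n (k+1) := by
  have hk1 : 1 ≤ k := le_trans hm hmk
  have hc1 : Commute (sig n k) (Dw n (k+2)) := by
    rw [Dw]
    refine sig_comm_word hk1 (by omega) ?_
    intro a ha
    rw [List.mem_reverse, List.mem_range'_1] at ha
    exact ⟨by omega, by omega, Or.inr (by omega)⟩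
  have hc2 : Commute (sig n (k+1)) (word n ((List.range' m (k - m)).reverse)) := by
    refine sig_comm_word (by omega) (by omega) ?_
    intro a ha
    rw [List.mem_reverse, List.mem_range'_1] at ha
    exact ⟨by omega, by omega, Or.inl (by omega)⟩
  have hb : sig n k * sig n (k+1) * sig n k = sig n (k+1) * sig n k * sig n (k+1) :=
    braid_braid hk1 (by omega)
  set a := sig n k
  set b := sig n (k+1)
  set D := Dw n (k+2)
  set W := word n ((List.range' m (k - m)).reverse)
  rw [Dw_decomp hm hmk hk]
  calc a * (D * b * a * W) = D * (a * b * a) * W := by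
        simp only [← mul_assoc]; rw [hc1.eq]
    _ = D * (b * a * b) * W := by rw [hb]
    _ = D * b * a * (b * W) := by simp only [mul_assoc]
    _ = D * b * a * W * b := by rw [hc2.eq, ← mul_assoc]

lemma Ew_mul_Dw {m : ℕ} (hm : 1 ≤ m) :
    ∀ d j, j + d = n - 1 → m ≤ j → 1 ≤ n →
    word n ((List.range' j d).reverse) * Dw n m = Dw n m * Dw n (j+1) := by
  intro d
  induction d with
  | zero =>
    intro j hj _ hn
    rw [show (List.range' j 0) = [] from rfl]
    rw [List.reverse_nil, word_nil, one_mul, show j + 1 = n by omega, Dw_ge (le_refl n), mul_one]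
  | succ d ih =>
    intro j hj hmj hn
    rw [List.range'_succ, List.reverse_cons, word_append, word_singleton]
    rw [mul_assoc, sig_mul_Dw hm hmj (by omega), ← mul_assoc,
      ih (j+1) (by omega) (by omega) hn, mul_assoc, ← Dw_succ (by omega)]

lemma Dw_mul_Dw {m j : ℕ} (hm : 1 ≤ m) (hmj : m ≤ j) (hj : j ≤ n - 1) (hn : 1 ≤ n) :
    Dw n j * Dw n m = sig n (n-1) * Dw n m * Dw n (j+1) := by
  rw [Dw_top hj hn, mul_assoc,
    Ew_mul_Dw hm (n - 1 - j) j (by omega) hmj hn, ← mul_assoc]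

/-! ### Left-hand (ascending) words -/

/-- `Cw n m = σ_1 σ_2 ⋯ σ_m`. -/
def Cw (n m : ℕ) : BraidGroup n := word n (List.range' 1 m)

lemma Cw_zero : Cw n 0 = 1 := rfl

lemma Cw_succ (m : ℕ) : Cw n (m+1) = Cw n m * sig n (m+1) := by
  rw [Cw, Cw, List.range'_1_concat, word_append, word_singleton, Nat.add_comm 1 m]

lemma Cw_decomp {k m : ℕ} (hk : 2 ≤ k) (hkm : k ≤ m) :
    Cw n m = Cw n (k-2) * sig n (k-1) * sig n k * word n (List.range' (k+1) (m - k)) := by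
  have h1 : List.range' 1 (k-2) ++ List.range' (k-1) (m - (k-2)) = List.range' 1 m := by
    have : List.range' 1 (k-2) ++ List.range' (1 + (k-2)) (m - (k-2))
        = List.range' 1 ((k-2) + (m - (k-2))) := List.range'_append_1
    rwa [show 1 + (k-2) = k - 1 by omega, show (k-2) + (m - (k-2)) = m by omega] at this
  have h2 : List.range' (k-1) (m - (k-2)) = (k-1) :: k :: List.range' (k+1) (m - k) := by
    rw [show m - (k-2) = (m - k) + 1 + 1 by omega, List.range'_succ, List.range'_succ,
      show k - 1 + 1 = k by omega]
  rw [Cw, ← h1, h2]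
  rw [show (List.range' 1 (k-2) ++ (k-1) :: k :: List.range' (k+1) (m - k))
    = (List.range' 1 (k-2) ++ [k-1]) ++ ([k] ++ List.range' (k+1) (m - k)) by simp]
  rw [word_append, word_append, word_append, word_singleton, word_singleton, Cw]
  group

lemma sig_mul_Cw {k m : ℕ} (hk : 2 ≤ k) (hkm : k ≤ m) (hm : m ≤ n - 1) :
    sig n k * Cw n m = Cw n m * sig n (k-1) := by
  have hc1 : Commute (sig n k) (Cw n (k-2)) := by
    rw [Cw]
    refine sig_comm_word (by omega) (by omega) ?_
    intro a ha
    rw [List.mem_range'_1] at ha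
    exact ⟨by omega, by omega, Or.inl (by omega)⟩
  have hc2 : Commute (sig n (k-1)) (word n (List.range' (k+1) (m - k))) := by
    refine sig_comm_word (by omega) (by omega) ?_
    intro a ha
    rw [List.mem_range'_1] at ha
    exact ⟨by omega, by omega, Or.inr (by omega)⟩
  have hb : sig n (k-1) * sig n k * sig n (k-1) = sig n k * sig n (k-1) * sig n k := by
    have := braid_braid (n := n) (i := k-1) (by omega) (by omega)
    rwa [show k - 1 + 1 = k by omega] at this
  set a := sig n k
  set b := sig n (k-1)
  set C := Cw n (k-2)
  set V := word n (List.range' (k+1) (m - k))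
  rw [Cw_decomp hk hkm]
  calc a * (C * b * a * V) = C * (a * b * a) * V := by
        simp only [← mul_assoc]; rw [hc1.eq]
    _ = C * (b * a * b) * V := by rw [← hb]
    _ = C * b * a * (b * V) := by simp only [mul_assoc]
    _ = C * b * a * V * b := by rw [hc2.eq, ← mul_assoc]

lemma Cw_mul_Cw {k m : ℕ} (hk : 1 ≤ k) (hkm : k ≤ m) (hm : m ≤ n - 1) :
    Cw n k * Cw n m = sig n 1 * Cw n m * Cw n (k-1) := by
  induction k with
  | zero => omega
  | succ k ih =>
    rcases Nat.eq_zero_or_pos k with hk0 | hk0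
    · subst hk0
      rw [show Cw n 1 = sig n 1 from by rw [show (1:ℕ) = 0 + 1 from rfl, Cw_succ, Cw_zero, one_mul],
        show (1:ℕ) - 1 = 0 from rfl, Cw_zero, mul_one]
    · have h1 := sig_mul_Cw (k := k+1) (by omega) hkm hm
      rw [show k + 1 - 1 = k by omega] at h1 ⊢
      rw [Cw_succ, mul_assoc, h1, ← mul_assoc, ih hk0 (by omega), mul_assoc, mul_assoc,
        show Cw n (k-1) * sig n k = Cw n k from by
          have := Cw_succ (n := n) (k-1)
          rw [show k - 1 + 1 = k by omega] at this
          exact this.symm, ← mul_assoc]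

end BraidProof

open BraidProof

section Algebra

variable (K : Type*) [Field K] (n : ℕ)

local notation "e" => MonoidAlgebra.of K (BraidGroup n)

/-- Partial sum `S m = Σ_{k=m}^{n} σ_{n-1}⋯σ_k` (with the empty word for `k = n`). -/
noncomputable def Sr (m : ℕ) : MonoidAlgebra K (BraidGroup n) :=
  ∑ k ∈ Finset.range (n + 1 - m), e (Dw n (m + k))

lemma Sr_top : Sr K n n = 1 := by
  rw [Sr, show n + 1 - n = 1 by omega, Finset.sum_range_one, Nat.add_zero,
    Dw_ge (le_refl n), map_one]

lemma Sr_split {m : ℕ} (hm : m + 1 ≤ n) : Sr K n m = e (Dw n m) + Sr K n (m+1) := by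
  rw [Sr, Sr, show n + 1 - m = (n - m) + 1 by omega, Finset.sum_range_succ']
  rw [show n + 1 - (m + 1) = n - m by omega, Nat.add_zero, add_comm]
  congr 1
  exact Finset.sum_congr rfl fun k _ => by rw [show m + (k+1) = m + 1 + k by omega]

lemma Sr_step {m : ℕ} (hm : 1 ≤ m) (hmn : m + 1 ≤ n) :
    Sr K n m * (1 - e (Dw n m)) =
      (1 - e (sig n (n-1) * Dw n m)) * Sr K n (m+1) := by
  have h2 : Sr K n m * e (Dw n m) = e (Dw n m) + e (sig n (n-1) * Dw n m) * Sr K n (m+1) := by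
    rw [Sr, Finset.sum_mul, show n + 1 - m = (n - m) + 1 by omega, Finset.sum_range_succ]
    rw [show m + (n - m) = n by omega, ← map_mul, Dw_ge (le_refl n), one_mul, add_comm]
    congr 1
    rw [Sr, show n + 1 - (m+1) = n - m by omega, Finset.mul_sum]
    refine Finset.sum_congr rfl fun k hk => ?_
    rw [Finset.mem_range] at hk
    rw [← map_mul, ← map_mul,
      Dw_mul_Dw hm (by omega) (by omega) (by omega),
      show m + k + 1 = m + 1 + k by omega, map_mul]
  rw [mul_sub, mul_one, h2, Sr_split K n hmn]
  noncomm_ring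

lemma Sr_prod : ∀ d m, 1 ≤ m → m + d = n →
    Sr K n m * ((List.range' m d).map (fun j => 1 - e (Dw n j))).prod
      = ((List.range' m d).map (fun j => 1 - e (sig n (n-1) * Dw n j))).prod := by
  intro d
  induction d with
  | zero =>
    intro m hm hmn
    simp only [List.range', List.map_nil, List.prod_nil, mul_one]
    rw [show m = n by omega, Sr_top]
  | succ d ih =>
    intro m hm hmn
    rw [List.range'_succ, List.map_cons, List.map_cons, List.prod_cons, List.prod_cons,
      ← mul_assoc, Sr_step K n hm (by omega), mul_assoc, ih (m+1) (by omega) (by omega)]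

/-- Partial sum `S' m = Σ_{k=0}^{m} σ_1⋯σ_k`. -/
noncomputable def Sl (m : ℕ) : MonoidAlgebra K (BraidGroup n) :=
  ∑ k ∈ Finset.range (m + 1), e (Cw n k)

lemma Sl_zero : Sl K n 0 = 1 := by
  rw [Sl, Finset.sum_range_one, Cw_zero, map_one]

lemma Sl_split {m : ℕ} (hm : 1 ≤ m) : Sl K n m = Sl K n (m-1) + e (Cw n m) := by
  rw [Sl, show m + 1 = (m - 1 + 1) + 1 by omega, Finset.sum_range_succ, Sl,
    show m - 1 + 1 = m by omega]

lemma Sl_step {m : ℕ} (hm : 1 ≤ m) (hmn : m ≤ n - 1) :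
    Sl K n m * (1 - e (Cw n m)) = (1 - e (sig n 1 * Cw n m)) * Sl K n (m-1) := by
  have h2 : Sl K n m * e (Cw n m) = e (Cw n m) + e (sig n 1 * Cw n m) * Sl K n (m-1) := by
    rw [Sl, Finset.sum_mul, Finset.sum_range_succ', ← map_mul, Cw_zero, one_mul, add_comm]
    congr 1
    rw [Sl, show m - 1 + 1 = m by omega, Finset.mul_sum]
    refine Finset.sum_congr rfl fun k hk => ?_
    rw [Finset.mem_range] at hk
    rw [← map_mul, ← map_mul, Cw_mul_Cw (by omega) (by omega) hmn,
      show k + 1 - 1 = k by omega, map_mul]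
  rw [mul_sub, mul_one, h2, Sl_split K n hm]
  noncomm_ring

lemma Sl_prod : ∀ d, d ≤ n - 1 →
    Sl K n d * (((List.range' 1 d).reverse).map (fun i => 1 - e (Cw n i))).prod
      = (((List.range' 1 d).reverse).map (fun i => 1 - e (sig n 1 * Cw n i))).prod := by
  intro d
  induction d with
  | zero =>
    intro _
    simp only [List.range', List.reverse_nil, List.map_nil, List.prod_nil, mul_one]
    exact Sl_zero K n
  | succ d ih =>
    intro hd
    rw [List.range'_1_concat, List.reverse_append, List.reverse_singleton,
      List.singleton_append, List.map_cons, List.map_cons, List.prod_cons, List.prod_cons,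
      ← mul_assoc, show 1 + d = d + 1 by omega]
    rw [show (Sl K n (d+1)) * (1 - e (Cw n (d+1)))
        = (1 - e (sig n 1 * Cw n (d+1))) * Sl K n d from by
      have := Sl_step K n (m := d+1) (by omega) hd
      rwa [show d + 1 - 1 = d by omega] at this]
    rw [mul_assoc, ih (by omega)]

lemma Tel_eq : Tel K n = Sr K n 1 := by
  rw [Tel, Sr]
  have h1 : ∀ j ∈ Finset.range n,
      e (word n ((List.range' (n - j) j).reverse)) = e (Dw n (n - j)) := by
    intro j hj
    rw [Finset.mem_range] at hj
    rw [Dw, show n - (n - j) = j by omega]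
  rw [Finset.sum_congr rfl h1]
  have h2 := Finset.sum_range_reflect (fun j => e (Dw n (j + 1))) n
  have h3 : ∀ j ∈ Finset.range n, e (Dw n (n - j)) = e (Dw n ((n - 1 - j) + 1)) := by
    intro j hj
    rw [Finset.mem_range] at hj
    rw [show n - 1 - j + 1 = n - j by omega]
  rw [Finset.sum_congr rfl h3, h2, show n + 1 - 1 = n by omega]
  exact Finset.sum_congr rfl fun k _ => by rw [show k + 1 = 1 + k by omega]

lemma Uel_eq (h0 : 1 ≤ n) : Uel K n = Sl K n (n - 1) := by
  rw [Uel, Sl, show (n - 1) + 1 = n by omega]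
  rfl

end Algebra

/-- let `K` be a field of characteristic `0` and `n ≥ 2`.  In the group algebra
`K[B_n]` one has `T_n P_n = T_n'` and `U_n Q_n = U_n'`. -/
theorem statement_2 (K : Type*) [Field K] [CharZero K] (n : ℕ) (hn : 2 ≤ n) :
    Tel K n * Pel K n = Tpel K n ∧ Uel K n * Qel K n = Upel K n := by
  constructor
  · have h := Sr_prod K n (n - 1) 1 (le_refl 1) (by omega)
    rw [← Tel_eq] at h
    exact h
  · have h := Sl_prod K n (n - 1) (le_refl _)
    rw [← Uel_eq K n (by omega)] at h
    exact h
end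

section
/- For every n ≥ 2 and every x ∈ V^{⊗n} one has the identity T_n x = Σ_{i=1}^N ∂_i^R(x) v_i in V^{⊗n}; consequently T_n x = 0 if and only if ∂_i^R(x) = 0 for all i = 1,…,N. Likewise U_n x = 0 if and only if ∂_i^L(x) = 0 for all i = 1,…,N. -/
open scoped BigOperators TensorProduct

/-- The tensor algebra `T(V)` of a vector space `V` with basis `v_0, …, v_{N-1}`:
its basis is the set of words in the letters `v_i`, and multiplication is concatenation. -/
abbrev TV (K : Type*) [Field K] (N : ℕ) : Type _ := MonoidAlgebra K (FreeMonoid (Fin N))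

section Ops

variable (K : Type*) [Field K] {N : ℕ}

/-- Swap the letters at (0-based) positions `k-1` and `k` of a list. -/
def swapList {α : Type*} (l : List α) (k : ℕ) : List α :=
  match l[k-1]?, l[k]? with
  | some a, some b => (l.set (k - 1) b).set k a
  | _, _ => l

/-- The braiding coefficient `q_{ab}` for the letters at positions `k-1`, `k`. -/
def coefAt (q : Fin N → Fin N → K) (l : List (Fin N)) (k : ℕ) : K :=
  match l[k-1]?, l[k]? with
  | some a, some b => q a b
  | _, _ => 1

/-- The action of the braid-group generator `σ_k` (paper indexing) on tensor powers of `V`: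
on a word `w` of length `n` with `1 ≤ k ≤ n-1` it swaps the letters at positions `k`, `k+1`
(1-based) and multiplies by the braiding coefficient. -/
noncomputable def sigOp (q : Fin N → Fin N → K) (k : ℕ) : TV K N →ₗ[K] TV K N :=
  (MonoidAlgebra.coeffLinearEquiv K : TV K N ≃ₗ[K] (FreeMonoid (Fin N) →₀ K)).symm.toLinearMap ∘ₗ Finsupp.lsum K (fun w =>
    if 1 ≤ k ∧ k < (FreeMonoid.toList w).length then
      Finsupp.lsingle (FreeMonoid.ofList (swapList (FreeMonoid.toList w) k)) ∘ₗ
        LinearMap.lsmul K K (coefAt K q (FreeMonoid.toList w) k)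
    else Finsupp.lsingle w) ∘ₗ (MonoidAlgebra.coeffLinearEquiv K : TV K N ≃ₗ[K] (FreeMonoid (Fin N) →₀ K)).toLinearMap

/-- The operator attached to a word `σ_{i₁}σ_{i₂}⋯σ_{i_r}` in the braid generators. -/
noncomputable def wordOp (q : Fin N → Fin N → K) (l : List ℕ) : Module.End K (TV K N) :=
  (l.map (sigOp K q)).prod

/-- The right differential element `T_n = 1 + σ_{n−1} + σ_{n−1}σ_{n−2} + ⋯ + σ_{n−1}⋯σ_1`
acting on `V^{⊗n}`. -/
noncomputable def TOp (q : Fin N → Fin N → K) (n : ℕ) : Module.End K (TV K N) :=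
  ∑ j ∈ Finset.range n, wordOp K q ((List.range' (n - j) j).reverse)

/-- The left differential element `U_n = 1 + σ_1 + σ_1σ_2 + ⋯ + σ_1σ_2⋯σ_{n−1}`
acting on `V^{⊗n}`. -/
noncomputable def UOp (q : Fin N → Fin N → K) (n : ℕ) : Module.End K (TV K N) :=
  ∑ j ∈ Finset.range n, wordOp K q (List.range' 1 j)

/-- The right Dynkin element `P_n = (1 − σ_{n−1}⋯σ_1)(1 − σ_{n−1}⋯σ_2)⋯(1 − σ_{n−1})`. -/
noncomputable def POp (q : Fin N → Fin N → K) (n : ℕ) : Module.End K (TV K N) :=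
  ((List.range' 1 (n - 1)).map (fun j =>
    1 - wordOp K q ((List.range' j (n - j)).reverse))).prod

/-- The left Dynkin element `Q_n = (1 − σ_1⋯σ_{n−1})(1 − σ_1⋯σ_{n−2})⋯(1 − σ_1)`. -/
noncomputable def QOp (q : Fin N → Fin N → K) (n : ℕ) : Module.End K (TV K N) :=
  (((List.range' 1 (n - 1)).reverse).map (fun m =>
    1 - wordOp K q (List.range' 1 m))).prod

/-- `T_n' = (1 − σ_{n−1}²σ_{n−2}⋯σ_1)(1 − σ_{n−1}²σ_{n−2}⋯σ_2)⋯(1 − σ_{n−1}²)`. -/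
noncomputable def TpOp (q : Fin N → Fin N → K) (n : ℕ) : Module.End K (TV K N) :=
  ((List.range' 1 (n - 1)).map (fun j =>
    1 - wordOp K q ((n - 1) :: (List.range' j (n - j)).reverse))).prod

/-- `U_n' = (1 − σ_1²σ_2⋯σ_{n−1})(1 − σ_1²σ_2⋯σ_{n−2})⋯(1 − σ_1²)`, viewed inside the
operators on `V^{⊗m}` for any `m ≥ n` (standard inclusion `σ_i ↦ σ_i`). -/
noncomputable def UpOp (q : Fin N → Fin N → K) (n : ℕ) : Module.End K (TV K N) :=
  (((List.range' 1 (n - 1)).reverse).map (fun m =>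
    1 - wordOp K q (1 :: List.range' 1 m))).prod

/-- `X_{m,n} = (1 − σ_{n−1}²σ_{n−2}⋯σ_{n−m})⋯(1 − σ_{n−1}²σ_{n−2})(1 − σ_{n−1}²)`;
one has `X_{n-1,n} = T_n'` and `X_{n-2,n} = ι_{n-1}^n(T_{n-1}')`. -/
noncomputable def XOp (q : Fin N → Fin N → K) (n m : ℕ) : Module.End K (TV K N) :=
  ((List.range' (n - m) m).map (fun j =>
    1 - wordOp K q ((n - 1) :: (List.range' j (n - j)).reverse))).prod

/-- The list of generator indices of the Garside element
`Δ_n = (σ_1⋯σ_{n−1})(σ_1⋯σ_{n−2})⋯(σ_1σ_2)σ_1`. -/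
def deltaList (n : ℕ) : List ℕ :=
  (((List.range (n - 1)).reverse).map (fun j => List.range' 1 (j + 1))).flatten

/-- The Garside element `Δ_n` acting on `V^{⊗n}`. -/
noncomputable def deltaOp (q : Fin N → Fin N → K) (n : ℕ) : Module.End K (TV K N) :=
  wordOp K q (deltaList n)

/-- The central element `θ_n = Δ_n²` acting on `V^{⊗n}`. -/
noncomputable def thetaOp (q : Fin N → Fin N → K) (n : ℕ) : Module.End K (TV K N) :=
  deltaOp K q n ^ 2

/-- The degree-`n` component `V^{⊗n}` of the tensor algebra. -/
noncomputable def deg (N n : ℕ) : Submodule K (TV K N) :=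
  (Finsupp.supported K K {w : FreeMonoid (Fin N) | (FreeMonoid.toList w).length = n}).comap
    (MonoidAlgebra.coeffLinearEquiv K : TV K N ≃ₗ[K] (FreeMonoid (Fin N) →₀ K)).toLinearMap

/-- The right differential operator `∂_i^R`: on a monomial `v_{f₁}⋯v_{f_n}` it is
`Σ_{k : f_k = i} (∏_{l>k} q_{i f_l}) · v_{f₁}⋯v̂_{f_k}⋯v_{f_n}`. -/
noncomputable def rdiff (q : Fin N → Fin N → K) (i : Fin N) : TV K N →ₗ[K] TV K N :=
  (MonoidAlgebra.coeffLinearEquiv K : TV K N ≃ₗ[K] (FreeMonoid (Fin N) →₀ K)).symm.toLinearMap ∘ₗ Finsupp.lsum K (fun w =>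
    ∑ k ∈ Finset.range (FreeMonoid.toList w).length,
      if (FreeMonoid.toList w)[k]? = some i then
        Finsupp.lsingle (FreeMonoid.ofList ((FreeMonoid.toList w).eraseIdx k)) ∘ₗ
          LinearMap.lsmul K K
            ((((FreeMonoid.toList w).drop (k + 1)).map (fun a => q i a)).prod)
      else 0) ∘ₗ (MonoidAlgebra.coeffLinearEquiv K : TV K N ≃ₗ[K] (FreeMonoid (Fin N) →₀ K)).toLinearMap

/-- The left differential operator `∂_i^L`: on a monomial `v_{f₁}⋯v_{f_n}` it is
`Σ_{k : f_k = i} (∏_{l<k} q_{f_l i}) · v_{f₁}⋯v̂_{f_k}⋯v_{f_n}`. -/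
noncomputable def ldiff (q : Fin N → Fin N → K) (i : Fin N) : TV K N →ₗ[K] TV K N :=
  (MonoidAlgebra.coeffLinearEquiv K : TV K N ≃ₗ[K] (FreeMonoid (Fin N) →₀ K)).symm.toLinearMap ∘ₗ Finsupp.lsum K (fun w =>
    ∑ k ∈ Finset.range (FreeMonoid.toList w).length,
      if (FreeMonoid.toList w)[k]? = some i then
        Finsupp.lsingle (FreeMonoid.ofList ((FreeMonoid.toList w).eraseIdx k)) ∘ₗ
          LinearMap.lsmul K K
            ((((FreeMonoid.toList w).take k).map (fun a => q a i)).prod)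
      else 0) ∘ₗ (MonoidAlgebra.coeffLinearEquiv K : TV K N ≃ₗ[K] (FreeMonoid (Fin N) →₀ K)).toLinearMap

end Ops

section Proofs

variable {K : Type*} [Field K] {N : ℕ} (q : Fin N → Fin N → K)

lemma wordOp_nil : wordOp K q [] = 1 := rfl

lemma wordOp_append (l₁ l₂ : List ℕ) :
    wordOp K q (l₁ ++ l₂) = wordOp K q l₁ * wordOp K q l₂ := by
  simp [wordOp, List.map_append, List.prod_append]

lemma wordOp_singleton (k : ℕ) : wordOp K q [k] = sigOp K q k := by
  simp [wordOp]

lemma getElem?_append_len {α : Type*} (a : List α) (x : α) (b : List α) :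
    (a ++ x :: b)[a.length]? = some x := by
  rw [List.getElem?_append_right (le_refl _)]
  simp

lemma getElem?_append_len_succ {α : Type*} (a : List α) (x y : α) (b : List α) :
    (a ++ x :: y :: b)[a.length + 1]? = some y := by
  rw [List.getElem?_append_right (by omega)]
  simp

lemma set_swap {α : Type*} (a : List α) (x y : α) (b : List α) :
    (((a ++ x :: y :: b).set a.length y).set (a.length + 1) x) = a ++ y :: x :: b := by
  rw [List.set_append_right _ _ (le_refl _), List.set_append_right _ _ (by omega)]
  simp [List.set]

lemma swapList_eq {α : Type*} (a : List α) (x y : α) (b : List α) :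
    swapList (a ++ x :: y :: b) (a.length + 1) = a ++ y :: x :: b := by
  unfold swapList
  simp only [Nat.add_sub_cancel, getElem?_append_len, getElem?_append_len_succ]
  exact set_swap a x y b

lemma coefAt_eq (a : List (Fin N)) (x y : Fin N) (b : List (Fin N)) :
    coefAt K q (a ++ x :: y :: b) (a.length + 1) = q x y := by
  unfold coefAt
  simp only [Nat.add_sub_cancel, getElem?_append_len, getElem?_append_len_succ]

lemma sigOp_single (a : List (Fin N)) (x y : Fin N) (b : List (Fin N)) (c : K) :
    sigOp K q (a.length + 1) (MonoidAlgebra.single (FreeMonoid.ofList (a ++ x :: y :: b)) c)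
      = MonoidAlgebra.single (FreeMonoid.ofList (a ++ y :: x :: b)) (q x y * c) := by
  simp only [sigOp, LinearMap.comp_apply, LinearEquiv.coe_coe,
    MonoidAlgebra.coeffLinearEquiv_apply, MonoidAlgebra.coeff_single, Finsupp.lsum_single]
  rw [if_pos (by simp [FreeMonoid.toList_ofList])]
  simp only [FreeMonoid.toList_ofList, LinearMap.comp_apply, LinearMap.lsmul_apply,
    swapList_eq, coefAt_eq, smul_eq_mul]
  rfl

lemma moveR (b a : List (Fin N)) (x : Fin N) (c : K) :
    wordOp K q ((List.range' (a.length + 1) b.length).reverse)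
      (MonoidAlgebra.single (FreeMonoid.ofList (a ++ x :: b)) c)
    = MonoidAlgebra.single (FreeMonoid.ofList (a ++ b ++ [x])) ((b.map (q x)).prod * c) := by
  induction b generalizing a c with
  | nil => simp [wordOp]
  | cons y b ih =>
    have hr : (List.range' (a.length + 1) (b.length + 1)).reverse
        = (List.range' (a.length + 2) b.length).reverse ++ [a.length + 1] := by
      rw [List.range'_succ, List.reverse_cons]
    rw [List.length_cons, hr, wordOp_append, wordOp_singleton, Module.End.mul_apply,
      sigOp_single]
    have h2 := ih (a ++ [y]) (q x y * c)
    simp only [List.length_append, List.length_singleton, List.append_assoc,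
      List.singleton_append, List.cons_append, List.nil_append] at h2 ⊢
    rw [h2, List.map_cons, List.prod_cons]
    congr 1
    ring

lemma moveL (a : List (Fin N)) (x : Fin N) (b : List (Fin N)) (c : K) :
    wordOp K q (List.range' 1 a.length)
      (MonoidAlgebra.single (FreeMonoid.ofList (a ++ x :: b)) c)
    = MonoidAlgebra.single (FreeMonoid.ofList (x :: (a ++ b)))
        ((a.map (fun t => q t x)).prod * c) := by
  induction a using List.reverseRecOn generalizing b c with
  | nil => simp [wordOp]
  | append_singleton a y ih =>
    have hr : List.range' 1 (a.length + 1) = List.range' 1 a.length ++ [a.length + 1] := by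
      rw [List.range'_concat]; ring_nf
    rw [List.length_append, List.length_singleton, hr, wordOp_append, wordOp_singleton,
      Module.End.mul_apply]
    rw [show a ++ [y] ++ x :: b = a ++ y :: x :: b by simp]
    rw [sigOp_single, ih]
    simp only [List.map_append, List.prod_append, List.map_cons, List.map_nil,
      List.prod_cons, List.prod_nil, List.append_assoc, List.singleton_append]
    congr 1
    ring


lemma rdiff_single (i : Fin N) (n : ℕ) (l : List (Fin N)) (hl : l.length = n) (c : K) :
    rdiff K q i (MonoidAlgebra.single (FreeMonoid.ofList l) c) =
      ∑ k ∈ Finset.range n, (if l[k]? = some i then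
        MonoidAlgebra.single (FreeMonoid.ofList (l.eraseIdx k))
          (((l.drop (k + 1)).map (fun a => q i a)).prod * c) else 0) := by
  simp only [rdiff, LinearMap.comp_apply, LinearEquiv.coe_coe,
    MonoidAlgebra.coeffLinearEquiv_apply, MonoidAlgebra.coeff_single, Finsupp.lsum_single,
    LinearMap.sum_apply, map_sum]
  refine Finset.sum_congr (by rw [FreeMonoid.toList_ofList, hl]) ?_
  intro k _
  simp only [FreeMonoid.toList_ofList]
  split_ifs with h
  · simp only [h, if_true]; rfl
  · simp only [h, if_false]; rfl

lemma ldiff_single (i : Fin N) (n : ℕ) (l : List (Fin N)) (hl : l.length = n) (c : K) :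
    ldiff K q i (MonoidAlgebra.single (FreeMonoid.ofList l) c) =
      ∑ k ∈ Finset.range n, (if l[k]? = some i then
        MonoidAlgebra.single (FreeMonoid.ofList (l.eraseIdx k))
          (((l.take k).map (fun a => q a i)).prod * c) else 0) := by
  simp only [ldiff, LinearMap.comp_apply, LinearEquiv.coe_coe,
    MonoidAlgebra.coeffLinearEquiv_apply, MonoidAlgebra.coeff_single, Finsupp.lsum_single,
    LinearMap.sum_apply, map_sum]
  refine Finset.sum_congr (by rw [FreeMonoid.toList_ofList, hl]) ?_
  intro k _
  simp only [FreeMonoid.toList_ofList]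
  split_ifs with h
  · simp only [h, if_true]; rfl
  · simp only [h, if_false]; rfl

lemma T_single (n : ℕ) (l : List (Fin N)) (hl : l.length = n) (c : K) :
    TOp K q n (MonoidAlgebra.single (FreeMonoid.ofList l) c) =
      ∑ i : Fin N, rdiff K q i (MonoidAlgebra.single (FreeMonoid.ofList l) c) *
        MonoidAlgebra.of K (FreeMonoid (Fin N)) (FreeMonoid.of i) := by
  have key : ∀ k ∈ Finset.range n,
      (wordOp K q ((List.range' (n - (n - 1 - k)) (n - 1 - k)).reverse))
        (MonoidAlgebra.single (FreeMonoid.ofList l) c)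
      = ∑ i : Fin N, (if l[k]? = some i then
          MonoidAlgebra.single (FreeMonoid.ofList (l.eraseIdx k ++ [i]))
            (((l.drop (k + 1)).map (fun a => q i a)).prod * c) else 0) := by
    intro k hk
    rw [Finset.mem_range] at hk
    have hkl : k < l.length := by omega
    have hx : l = l.take k ++ l[k] :: l.drop (k + 1) := by
      rw [List.getElem_cons_drop, List.take_append_drop]
    have hlen : (l.take k).length = k := by simp; omega
    have hmv := moveR q (l.drop (k + 1)) (l.take k) (l[k]'hkl) c
    rw [hlen, ← hx] at hmv
    have h1 : n - (n - 1 - k) = k + 1 := by omega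
    have h2 : n - 1 - k = (l.drop (k + 1)).length := by simp; omega
    rw [h1, h2, hmv]
    have hcond : ∀ i : Fin N, (l[k]? = some i) = (l[k]'hkl = i) := by
      intro i; simp [List.getElem?_eq_getElem hkl]
    simp only [hcond]
    rw [Finset.sum_ite_eq]
    simp only [Finset.mem_univ, if_true]
    rw [List.eraseIdx_eq_take_drop_succ]
  rw [TOp, LinearMap.sum_apply,
    ← Finset.sum_range_reflect (fun j => (wordOp K q ((List.range' (n - j) j).reverse))
      (MonoidAlgebra.single (FreeMonoid.ofList l) c)) n,
    Finset.sum_congr rfl key, Finset.sum_comm]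
  refine Finset.sum_congr rfl ?_
  intro i _
  rw [MonoidAlgebra.of_apply, rdiff_single q i n l hl, Finset.sum_mul]
  refine Finset.sum_congr rfl ?_
  intro k _
  split_ifs with h
  · erw [MonoidAlgebra.single_mul_single]
    rw [mul_one]
    rfl
  · rw [zero_mul]

lemma U_single (n : ℕ) (l : List (Fin N)) (hl : l.length = n) (c : K) :
    UOp K q n (MonoidAlgebra.single (FreeMonoid.ofList l) c) =
      ∑ i : Fin N, MonoidAlgebra.of K (FreeMonoid (Fin N)) (FreeMonoid.of i) *
        ldiff K q i (MonoidAlgebra.single (FreeMonoid.ofList l) c) := by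
  have key : ∀ k ∈ Finset.range n,
      (wordOp K q (List.range' 1 k))
        (MonoidAlgebra.single (FreeMonoid.ofList l) c)
      = ∑ i : Fin N, (if l[k]? = some i then
          MonoidAlgebra.single (FreeMonoid.ofList (i :: l.eraseIdx k))
            (((l.take k).map (fun a => q a i)).prod * c) else 0) := by
    intro k hk
    rw [Finset.mem_range] at hk
    have hkl : k < l.length := by omega
    have hx : l = l.take k ++ l[k] :: l.drop (k + 1) := by
      rw [List.getElem_cons_drop, List.take_append_drop]
    have hlen : (l.take k).length = k := by simp; omega
    have hmv := moveL q (l.take k) (l[k]'hkl) (l.drop (k + 1)) c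
    rw [hlen, ← hx] at hmv
    rw [hmv]
    have hcond : ∀ i : Fin N, (l[k]? = some i) = (l[k]'hkl = i) := by
      intro i; simp [List.getElem?_eq_getElem hkl]
    simp only [hcond]
    rw [Finset.sum_ite_eq]
    simp only [Finset.mem_univ, if_true]
    rw [List.eraseIdx_eq_take_drop_succ]
  rw [UOp, LinearMap.sum_apply, Finset.sum_congr rfl key, Finset.sum_comm]
  refine Finset.sum_congr rfl ?_
  intro i _
  rw [MonoidAlgebra.of_apply, ldiff_single q i n l hl, Finset.mul_sum]
  refine Finset.sum_congr rfl ?_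
  intro k _
  split_ifs with h
  · erw [MonoidAlgebra.single_mul_single]
    rw [one_mul]
    rfl
  · rw [mul_zero]


lemma mul_single_right (z : TV K N) (m : FreeMonoid (Fin N)) :
    z * MonoidAlgebra.of K (FreeMonoid (Fin N)) m = MonoidAlgebra.mapDomain (· * m) z := by
  induction z using MonoidAlgebra.induction_linear with
  | zero => simp
  | add f g hf hg => rw [add_mul, hf, hg, MonoidAlgebra.mapDomain_add]
  | single a b =>
    rw [MonoidAlgebra.of_apply]
    erw [MonoidAlgebra.single_mul_single]
    rw [mul_one, MonoidAlgebra.mapDomain_single]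

lemma mul_single_left (z : TV K N) (m : FreeMonoid (Fin N)) :
    MonoidAlgebra.of K (FreeMonoid (Fin N)) m * z = MonoidAlgebra.mapDomain (m * ·) z := by
  induction z using MonoidAlgebra.induction_linear with
  | zero => simp
  | add f g hf hg => rw [mul_add, hf, hg, MonoidAlgebra.mapDomain_add]
  | single a b =>
    rw [MonoidAlgebra.of_apply]
    erw [MonoidAlgebra.single_mul_single]
    rw [one_mul, MonoidAlgebra.mapDomain_single]

lemma keyR (y : Fin N → TV K N)
    (h : ∑ i : Fin N, y i * MonoidAlgebra.of K (FreeMonoid (Fin N)) (FreeMonoid.of i) = 0)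
    (i : Fin N) : y i = 0 := by
  ext u
  have h2 := congrArg (fun z : TV K N => z.coeff (u * FreeMonoid.of i)) h
  rw [MonoidAlgebra.coeff_sum, Finset.sum_apply'] at h2
  have hterm : ∀ j : Fin N,
      (y j * MonoidAlgebra.of K (FreeMonoid (Fin N)) (FreeMonoid.of j)).coeff (u * FreeMonoid.of i)
        = if j = i then (y i).coeff u else 0 := by
    intro j
    rw [mul_single_right, MonoidAlgebra.coeff_mapDomain]
    by_cases hj : j = i
    · subst hj
      rw [if_pos rfl, Finsupp.mapDomain_apply (mul_left_injective _)]
    · rw [if_neg hj, Finsupp.mapDomain_notin_range]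
      rintro ⟨a, ha⟩
      have ht := congrArg FreeMonoid.toList ha
      simp only [FreeMonoid.toList_mul, FreeMonoid.toList_of] at ht
      have hlen : (FreeMonoid.toList a).length = (FreeMonoid.toList u).length := by
        have := congrArg List.length ht; simpa using this
      have := List.append_inj_right ht hlen
      simp only [List.cons.injEq] at this
      exact hj this.1
  simp only [hterm, Finset.sum_ite_eq', Finset.mem_univ, if_true] at h2
  simpa using h2

lemma keyL (y : Fin N → TV K N)
    (h : ∑ i : Fin N, MonoidAlgebra.of K (FreeMonoid (Fin N)) (FreeMonoid.of i) * y i = 0)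
    (i : Fin N) : y i = 0 := by
  ext u
  have h2 := congrArg (fun z : TV K N => z.coeff (FreeMonoid.of i * u)) h
  rw [MonoidAlgebra.coeff_sum, Finset.sum_apply'] at h2
  have hterm : ∀ j : Fin N,
      (MonoidAlgebra.of K (FreeMonoid (Fin N)) (FreeMonoid.of j) * y j).coeff (FreeMonoid.of i * u)
        = if j = i then (y i).coeff u else 0 := by
    intro j
    rw [mul_single_left, MonoidAlgebra.coeff_mapDomain]
    by_cases hj : j = i
    · subst hj
      rw [if_pos rfl, Finsupp.mapDomain_apply (mul_right_injective _)]
    · rw [if_neg hj, Finsupp.mapDomain_notin_range]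
      rintro ⟨a, ha⟩
      have ht := congrArg FreeMonoid.toList ha
      simp only [FreeMonoid.toList_mul, FreeMonoid.toList_of, List.singleton_append,
        List.cons.injEq] at ht
      exact hj ht.1
  simp only [hterm, Finset.sum_ite_eq', Finset.mem_univ, if_true] at h2
  simpa using h2


end Proofs

/-- for every `n ≥ 2` and every `x ∈ V^{⊗n}` one has
`T_n x = Σ_{i=1}^N ∂_i^R(x) v_i`; consequently `T_n x = 0` iff `∂_i^R(x) = 0` for all `i`,
and likewise `U_n x = 0` iff `∂_i^L(x) = 0` for all `i`. -/
theorem statement_3 (K : Type*) [Field K] [CharZero K] (N : ℕ) (hN : 1 ≤ N)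
    (q : Fin N → Fin N → K) (hq : ∀ i j, q i j ≠ 0)
    (n : ℕ) (hn : 2 ≤ n) (x : TV K N) (hx : x ∈ deg K N n) :
    (TOp K q n x = ∑ i : Fin N,
        rdiff K q i x * MonoidAlgebra.of K (FreeMonoid (Fin N)) (FreeMonoid.of i)) ∧
    (TOp K q n x = 0 ↔ ∀ i : Fin N, rdiff K q i x = 0) ∧
    (UOp K q n x = 0 ↔ ∀ i : Fin N, ldiff K q i x = 0) := by
  have hsupp : ∀ w ∈ x.coeff.support, (FreeMonoid.toList w).length = n :=
    fun w hw => (Finsupp.mem_supported K x.coeff).mp hx hw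
  have hT : TOp K q n x = ∑ i : Fin N,
      rdiff K q i x * MonoidAlgebra.of K (FreeMonoid (Fin N)) (FreeMonoid.of i) := by
    conv_lhs => rw [← MonoidAlgebra.sum_coeff_single x]
    conv_rhs => rw [← MonoidAlgebra.sum_coeff_single x]
    simp only [map_finsuppSum, Finsupp.sum_mul]
    simp only [Finsupp.sum]
    rw [Finset.sum_comm]
    refine Finset.sum_congr rfl ?_
    intro w hw
    exact T_single q n (FreeMonoid.toList w) (hsupp w hw) (x.coeff w)
  have hU : UOp K q n x = ∑ i : Fin N,
      MonoidAlgebra.of K (FreeMonoid (Fin N)) (FreeMonoid.of i) * ldiff K q i x := by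
    conv_lhs => rw [← MonoidAlgebra.sum_coeff_single x]
    conv_rhs => rw [← MonoidAlgebra.sum_coeff_single x]
    simp only [map_finsuppSum, Finsupp.mul_sum]
    simp only [Finsupp.sum]
    rw [Finset.sum_comm]
    refine Finset.sum_congr rfl ?_
    intro w hw
    exact U_single q n (FreeMonoid.toList w) (hsupp w hw) (x.coeff w)
  refine ⟨hT, ⟨?_, ?_⟩, ⟨?_, ?_⟩⟩
  · intro h i
    exact keyR (fun i => rdiff K q i x) (hT.symm.trans h) i
  · intro h
    rw [hT]
    simp [h]
  · intro h i
    exact keyL (fun i => ldiff K q i x) (hU.symm.trans h) i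
  · intro h
    rw [hU]
    simp [h]
end
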